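/- Let f : ℤ^n → ℂ and fix m ≥ 1. Suppose every (m+1)-fold iterated difference of f vanishes. Then for all x, y ∈ ℤ^n, f(x + y) = Σ over functions k : Fin n → ℕ with Σ k_i ≤ m of (Δ^k f)(x) · Π_i C(y_i, k_i), where Δ^k = Π_i Δ_i^{k_i} and C(y_i, k_i) denotes the (generalized, integer-argument) binomial coefficient y_i choose k_i extended to negative integers. -/

import Mathlib

open Finset

/-- Forward finite difference in direction `i` for functions on the crossing-change lattice. -/
def fdiff {ι : Type*} [DecidableEq ι] (i : ι) (f : (ι → ℤ) → ℂ) : (ι → ℤ) → ℂ :=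
  fun x => f (x + Pi.single i 1) - f x

/-- Iterated finite difference along a list of indices. -/
def fdiffList {ι : Type*} [DecidableEq ι] (l : List ι) (f : (ι → ℤ) → ℂ) : (ι → ℤ) → ℂ :=
  l.foldr fdiff f

/-- `f` is of Vassiliev type ≤ m if every (m+1)-fold iterated difference vanishes. -/
def VasType {ι : Type*} [DecidableEq ι] (m : ℕ) (f : (ι → ℤ) → ℂ) : Prop :=
  ∀ l : List ι, l.length = m + 1 → fdiffList l f = 0

/-- Mixed iterated difference with multiplicity vector k. -/
def fdiffMulti {n : ℕ} (k : Fin n → ℕ) (f : (Fin n → ℤ) → ℂ) : (Fin n → ℤ) → ℂ :=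
  fdiffList ((List.finRange n).flatMap fun i => List.replicate (k i) i) f

/-- Generalized (integer-argument) binomial coefficient y choose k. -/
noncomputable def genChoose (y : ℤ) (k : ℕ) : ℂ :=
  (∏ j ∈ Finset.range k, ((y : ℂ) - j)) / (k.factorial : ℂ)

/-! The Newton sum of degree `m` with coefficients `c k`, as a function of `y`, is
`∑_{|k| ≤ m} c k ∏ᵢ C(yᵢ, kᵢ)`. By Pascal's rule its `i`-th difference is the Newton sum of degree
`m - 1` with coefficients `c (k + eᵢ)`. Hence, by induction on `m`, `y ↦ f (x + y)` and the Newton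
sum with coefficients `Δᵏ f x` have the same differences and agree at `0`, so they coincide: a
function on `ℤⁿ` whose differences vanish is constant, because its periods form a subgroup
containing the unit vectors. -/

section fdiff

variable {ι : Type*} [DecidableEq ι]

theorem fdiffList_append (l₁ l₂ : List ι) (f : (ι → ℤ) → ℂ) :
    fdiffList (l₁ ++ l₂) f = fdiffList l₁ (fdiffList l₂ f) :=
  List.foldr_append

theorem fdiff_comm (i j : ι) (f : (ι → ℤ) → ℂ) :
    fdiff i (fdiff j f) = fdiff j (fdiff i f) := by
  funext x
  simp only [fdiff, add_right_comm x]
  ring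

theorem fdiffList_perm {l₁ l₂ : List ι} (h : l₁.Perm l₂) (f : (ι → ℤ) → ℂ) :
    fdiffList l₁ f = fdiffList l₂ f := by
  induction h with
  | nil => rfl
  | cons a _ ih => exact congrArg (fdiff a) ih
  | swap a b l => exact fdiff_comm b a _
  | trans _ _ ih₁ ih₂ => exact ih₁.trans ih₂

theorem fdiff_sub (i : ι) (g h : (ι → ℤ) → ℂ) : fdiff i (g - h) = fdiff i g - fdiff i h := by
  funext x
  simp only [fdiff, Pi.sub_apply]
  ring

theorem fdiff_comp_add_left (i : ι) (f : (ι → ℤ) → ℂ) (x : ι → ℤ) :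
    fdiff i (fun y => f (x + y)) = fun y => fdiff i f (x + y) := by
  funext y
  simp only [fdiff, add_assoc]

theorem VasType.fdiff {m : ℕ} {f : (ι → ℤ) → ℂ} (hf : VasType (m + 1) f) (i : ι) :
    VasType m (_root_.fdiff i f) := fun l hl =>
  (fdiffList_append l [i] f).symm.trans (hf _ (by simp [hl]))

theorem periodic_of_fdiff_eq_zero [Fintype ι] {g : (ι → ℤ) → ℂ} (hg : ∀ i, fdiff i g = 0)
    (y : ι → ℤ) : Function.Periodic g y := by
  have unit_period (i : ι) : Function.Periodic g (Pi.single i 1) := fun x =>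
    sub_eq_zero.mp (congrFun (hg i) x)
  rw [← univ_sum_single y]
  refine sum_induction _ (Function.Periodic g) (fun _ _ => Function.Periodic.add_period)
    (fun _ => by rw [add_zero]) fun i _ => ?_
  simpa [← Pi.single_smul'] using (unit_period i).zsmul (y i)

theorem eq_of_fdiff_eq [Fintype ι] {g h : (ι → ℤ) → ℂ} (hgh : ∀ i, fdiff i g = fdiff i h)
    (h0 : g 0 = h 0) : g = h := by
  funext y
  have := periodic_of_fdiff_eq_zero (g := g - h) (fun i => by rw [fdiff_sub, hgh, sub_self]) y 0
  rw [zero_add, Pi.sub_apply, Pi.sub_apply, h0, sub_self] at this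
  exact sub_eq_zero.mp this

end fdiff

theorem genChoose_eq_choose (y : ℤ) (k : ℕ) : genChoose y k = Ring.choose y k := by
  have h := Ring.descPochhammer_eq_factorial_smul_choose y k
  rw [← Polynomial.eval_eq_smeval, descPochhammer_eval_eq_prod_range, nsmul_eq_mul] at h
  rw [genChoose, div_eq_iff (by exact_mod_cast k.factorial_ne_zero)]
  exact_mod_cast h.trans (mul_comm _ _)

theorem genChoose_zero_right (y : ℤ) : genChoose y 0 = 1 := by
  simp [genChoose]

theorem genChoose_zero_left {k : ℕ} (hk : 0 < k) : genChoose 0 k = 0 := by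
  simp [genChoose_eq_choose, Ring.choose_zero_pos ℤ hk]

theorem genChoose_succ_succ (y : ℤ) (k : ℕ) :
    genChoose (y + 1) (k + 1) = genChoose y k + genChoose y (k + 1) := by
  simp only [genChoose_eq_choose, Ring.choose_succ_succ, Int.cast_add]

section newton

variable {ι : Type*} [Fintype ι] [DecidableEq ι]

-- Defined as the image of the index set of `discrete_taylor_expansion`, which makes the final
-- reindexing a `sum_map`.
variable (ι) in
def degreeLE (m : ℕ) : Finset (ι → ℕ) :=
  (univ.filter fun k : ι → Fin (m + 1) => ∑ i, (k i : ℕ) ≤ m).map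
    (Function.Embedding.piCongrRight fun _ => Fin.valEmbedding)

theorem mem_degreeLE {m : ℕ} {k : ι → ℕ} : k ∈ degreeLE ι m ↔ ∑ i, k i ≤ m := by
  simp only [degreeLE, mem_map, mem_filter, mem_univ, true_and]
  constructor
  · rintro ⟨k, hk, rfl⟩
    exact hk
  · intro hk
    exact ⟨fun i => ⟨k i, Nat.lt_succ_of_le ((single_le_sum (by simp) (mem_univ i)).trans hk)⟩,
      hk, rfl⟩

theorem degreeLE_zero : degreeLE ι 0 = {0} := by
  ext k
  simp [mem_degreeLE, funext_iff]

theorem sum_degreeLE_succ {M : Type*} [AddCommMonoid M] (m : ℕ) (i : ι) (F : (ι → ℕ) → M)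
    (hF : ∀ k, k i = 0 → F k = 0) :
    ∑ k ∈ degreeLE ι (m + 1), F k = ∑ k ∈ degreeLE ι m, F (k + Pi.single i 1) := by
  have sum_add_single (k : ι → ℕ) : ∑ j, (k + Pi.single i 1 : ι → ℕ) j = ∑ j, k j + 1 := by
    simp [sum_add_distrib]
  calc ∑ k ∈ degreeLE ι (m + 1), F k
      = ∑ k ∈ (degreeLE ι m).map (addRightEmbedding (Pi.single i 1)), F k := by
        refine (sum_subset (fun k hk => ?_) fun k hk hk' => hF k ?_).symm
        · obtain ⟨k, hkm, rfl⟩ := mem_map.mp hk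
          rw [mem_degreeLE] at hkm ⊢
          rw [addRightEmbedding_apply, sum_add_single]
          omega
        · by_contra hki
          have hle : Pi.single i 1 ≤ k := fun j => by
            rw [Pi.single_apply]
            split_ifs with hj
            · exact hj ▸ Nat.one_le_iff_ne_zero.mpr hki
            · exact Nat.zero_le _
          have hsum := sum_add_single (k - Pi.single i 1)
          rw [tsub_add_cancel_of_le hle] at hsum
          rw [mem_degreeLE] at hk
          exact hk' (mem_map.mpr ⟨k - Pi.single i 1, mem_degreeLE.mpr (by omega),
            tsub_add_cancel_of_le hle⟩)
    _ = ∑ k ∈ degreeLE ι m, F (k + Pi.single i 1) := sum_map _ _ _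

noncomputable def newtonSum (m : ℕ) (c : (ι → ℕ) → ℂ) (z : ι → ℤ) : ℂ :=
  ∑ k ∈ degreeLE ι m, c k * ∏ i, genChoose (z i) (k i)

theorem fdiff_prod_genChoose (k : ι → ℕ) (i : ι) (z : ι → ℤ) :
    fdiff i (fun z => ∏ j, genChoose (z j) (k j)) z =
      (genChoose (z i + 1) (k i) - genChoose (z i) (k i)) * ∏ j ∈ {i}ᶜ, genChoose (z j) (k j) := by
  simp only [fdiff]
  rw [Fintype.prod_eq_mul_prod_compl i, Fintype.prod_eq_mul_prod_compl i (fun j => _), sub_mul]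
  congr 2
  · simp
  · exact prod_congr rfl fun j hj => by simp [Pi.single_eq_of_ne (show j ≠ i by simpa using hj)]

theorem newtonSum_apply_zero (m : ℕ) (c : (ι → ℕ) → ℂ) : newtonSum m c 0 = c 0 := by
  rw [newtonSum, sum_eq_single_of_mem 0 (mem_degreeLE.mpr (by simp))]
  · simp [genChoose_zero_right]
  · intro k _ hk
    obtain ⟨i, hi⟩ := Function.ne_iff.mp hk
    rw [prod_eq_zero (mem_univ i) (genChoose_zero_left (Nat.pos_of_ne_zero hi)), mul_zero]

theorem fdiff_newtonSum_zero (i : ι) (c : (ι → ℕ) → ℂ) : fdiff i (newtonSum 0 c) = 0 := by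
  funext z
  simp [fdiff, newtonSum, degreeLE_zero, genChoose_zero_right]

theorem fdiff_newtonSum_succ (m : ℕ) (i : ι) (c : (ι → ℕ) → ℂ) :
    fdiff i (newtonSum (m + 1) c) = newtonSum m (fun k => c (k + Pi.single i 1)) := by
  funext z
  calc fdiff i (newtonSum (m + 1) c) z
      = ∑ k ∈ degreeLE ι (m + 1), c k * fdiff i (fun z => ∏ j, genChoose (z j) (k j)) z := by
        simp only [fdiff, newtonSum, mul_sub, sum_sub_distrib]
    _ = ∑ k ∈ degreeLE ι m, c (k + Pi.single i 1) *
          fdiff i (fun z => ∏ j, genChoose (z j) ((k + Pi.single i 1 : ι → ℕ) j)) z :=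
        sum_degreeLE_succ m i _ fun k hk => by
          rw [fdiff_prod_genChoose, hk, genChoose_zero_right, genChoose_zero_right, sub_self,
            zero_mul, mul_zero]
    _ = newtonSum m (fun k => c (k + Pi.single i 1)) z := by
        refine sum_congr rfl fun k _ => ?_
        rw [fdiff_prod_genChoose, Fintype.prod_eq_mul_prod_compl i]
        congr 2
        · simp [genChoose_succ_succ]
        · exact prod_congr rfl fun j hj => by
            simp [Pi.single_eq_of_ne (show j ≠ i by simpa using hj)]

end newton

section multi

variable {n : ℕ}

theorem count_flatMap_replicate (k : Fin n → ℕ) (j : Fin n) :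
    ((List.finRange n).flatMap fun i => List.replicate (k i) i).count j = k j := by
  rw [List.count_flatMap, ← Fin.sum_univ_def]
  simp [List.count_replicate]

theorem fdiffMulti_zero (f : (Fin n → ℤ) → ℂ) : fdiffMulti 0 f = f := by
  have no_steps :
      (List.finRange n).flatMap (fun i => List.replicate ((0 : Fin n → ℕ) i) i) = [] := by
    simp
  rw [fdiffMulti, no_steps]
  rfl

theorem fdiffMulti_add_single (k : Fin n → ℕ) (i : Fin n) (f : (Fin n → ℤ) → ℂ) :
    fdiffMulti (k + Pi.single i 1) f = fdiffMulti k (fdiff i f) := by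
  rw [fdiffMulti, fdiffList_perm (l₂ := _ ++ [i]) _ f, fdiffList_append]
  · rfl
  refine List.perm_iff_count.mpr fun j => ?_
  rw [List.count_append, count_flatMap_replicate, count_flatMap_replicate]
  by_cases hj : j = i
  · simp [hj]
  · simp [hj, Ne.symm hj]

theorem VasType.eq_newtonSum {m : ℕ} {f : (Fin n → ℤ) → ℂ} (hf : VasType m f) (x : Fin n → ℤ) :
    (fun y => f (x + y)) = newtonSum m (fun k => fdiffMulti k f x) := by
  induction m generalizing f with
  | zero =>
    refine eq_of_fdiff_eq (fun i => ?_) (by simp [newtonSum_apply_zero, fdiffMulti_zero])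
    rw [fdiff_comp_add_left, fdiff_newtonSum_zero, show _root_.fdiff i f = 0 from hf [i] rfl]
    rfl
  | succ m ih =>
    refine eq_of_fdiff_eq (fun i => ?_) (by simp [newtonSum_apply_zero, fdiffMulti_zero])
    rw [fdiff_comp_add_left, ih (hf.fdiff i), fdiff_newtonSum_succ]
    simp only [fdiffMulti_add_single]

end multi

theorem discrete_taylor_expansion_general {n m : ℕ}
    (f : (Fin n → ℤ) → ℂ) (hf : VasType m f) (x y : Fin n → ℤ) :
    f (x + y) =
      ∑ k ∈ Finset.univ.filter (fun k : Fin n → Fin (m + 1) => ∑ i, (k i : ℕ) ≤ m),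
        fdiffMulti (fun i => (k i : ℕ)) f x * ∏ i, genChoose (y i) (k i : ℕ) :=
  (congrFun (hf.eq_newtonSum x) y).trans (sum_map _ _ _)

theorem discrete_taylor_expansion {n m : ℕ} (hm : 1 ≤ m)
    (f : (Fin n → ℤ) → ℂ) (hf : VasType m f) (x y : Fin n → ℤ) :
    f (x + y) =
      ∑ k ∈ Finset.univ.filter (fun k : Fin n → Fin (m + 1) => ∑ i, (k i : ℕ) ≤ m),
        fdiffMulti (fun i => (k i : ℕ)) f x * ∏ i, genChoose (y i) (k i : ℕ) :=
  discrete_taylor_expansion_general f hf x y
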